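/- For every n ≥ 0, the number of distinct factors of length n of the infinite Fibonacci word f is exactly n + 1. -/

import Mathlib

/-!
The Fibonacci word is the mechanical word `f k = ⌊(k + 2) α⌋ - ⌊(k + 1) α⌋` of slope
`α = 2 - φ = φ⁻²`. Indeed `fibPhi^[k + 2] [0] = fibPhi^[k + 1] [0] ++ fibPhi^[k] [0]`, and the
mechanical word has the matching self-similarity because `F_m α` lies within `|ψ| ^ m` of an
integer while, by a norm argument in `ℤ[φ]`, no `t α` with `0 < t < F_m` comes that close.

In a mechanical word `k ↦ ⌊(k + 1) α + ρ⌋ - ⌊k α + ρ⌋` the factor of length `n` at `i` only depends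
on which of the points `⌈s α⌉ - s α`, `s ≤ n`, exceed the fractional part of `i α + ρ`; these sets
are nested, so there are at most `n + 1` factors of length `n`. Conversely, if a word has as many
factors of length `n + 1` as of length `n`, every factor of length `n` has a unique extension and
the word is eventually periodic (Morse–Hedlund), which for a mechanical word forces `p α ∈ ℤ`.
-/

def fibPhi (w : List ℕ) : List ℕ := (w.map (fun c => if c = 0 then [0, 1] else [0])).flatten

def fibWord (i : ℕ) : ℕ := ((fibPhi^[i + 2]) [0]).getD i 0

def IsFibFactor (x : List ℕ) : Prop :=
  ∃ i : ℕ, x = (List.range x.length).map (fun t => fibWord (i + t))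

open Set Function

theorem Function.FactorsThrough.finite_range_and_ncard_range_le {ι β γ : Type*} {w : ι → β}
    {r : ι → γ} (h : w.FactorsThrough r) (hr : (range r).Finite) :
    (range w).Finite ∧ (range w).ncard ≤ (range r).ncard := by
  cases isEmpty_or_nonempty ι
  · simp [range_eq_empty]
  · have : range w = extend r w (fun _ => w (Classical.arbitrary ι)) '' range r := by
      rw [← range_comp, h.extend_comp]
    rw [this]
    exact ⟨hr.image _, ncard_image_le hr⟩

section Window

variable {β : Type*} (u : ℕ → β)

def window (n i : ℕ) : List β := (List.range n).map fun t => u (i + t)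

@[simp] lemma length_window (n i : ℕ) : (window u n i).length = n := by simp [window]

lemma window_comp {γ : Type*} (f : β → γ) (n i : ℕ) :
    window (f ∘ u) n i = (window u n i).map f := by
  simp [window]

lemma window_add (m n i : ℕ) : window u (m + n) i = window u m i ++ window u n (i + m) := by
  simp [window, List.range_add, add_assoc]

lemma window_succ (n i : ℕ) : window u (n + 1) i = u i :: window u n (i + 1) := by
  simp [window, List.range_succ_eq_map, add_assoc, add_comm 1]

lemma take_window_succ (n i : ℕ) : (window u (n + 1) i).take n = window u n i := by
  rw [window, ← List.map_take, List.take_range, min_eq_left n.le_succ, window]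

lemma range_window_succ_image_take (n : ℕ) :
    List.take n '' range (window u (n + 1)) = range (window u n) := by
  rw [← range_comp]
  exact congrArg range (funext (take_window_succ u n))

lemma ncard_range_window_comp {γ : Type*} {f : β → γ} (hf : Injective f) (n : ℕ) :
    (range (window (f ∘ u) n)).ncard = (range (window u n)).ncard := by
  rw [← ncard_image_of_injective _ (List.map_injective_iff.2 hf), ← range_comp]
  exact congrArg _ (congrArg range (funext (window_comp u f n)))

lemma ncard_range_window_le_succ (n : ℕ) (hfin : (range (window u (n + 1))).Finite) :
    (range (window u n)).ncard ≤ (range (window u (n + 1))).ncard := by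
  rw [← range_window_succ_image_take]
  exact ncard_image_le hfin

lemma window_succ_eq_of_ncard_eq {n : ℕ} (hfin : (range (window u (n + 1))).Finite)
    (hcard : (range (window u (n + 1))).ncard = (range (window u n)).ncard) {i j : ℕ}
    (hij : window u n i = window u n j) : window u (n + 1) i = window u (n + 1) j := by
  have hinj : InjOn (List.take n) (range (window u (n + 1))) :=
    injOn_of_ncard_image_eq (by rw [range_window_succ_image_take, hcard]) hfin
  exact hinj (mem_range_self i) (mem_range_self j) (by rwa [take_window_succ, take_window_succ])

theorem exists_eventually_periodic_of_ncard_range_window_eq {n : ℕ}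
    (hfin : (range (window u (n + 1))).Finite)
    (hcard : (range (window u (n + 1))).ncard = (range (window u n)).ncard) :
    ∃ a p, 0 < p ∧ ∀ k ≥ a, u (k + p) = u k := by
  have hstep {i j : ℕ} (hij : window u n i = window u n j) :
      u i = u j ∧ window u n (i + 1) = window u n (j + 1) := by
    simpa [window_succ] using window_succ_eq_of_ncard_eq u hfin hcard hij
  have : Finite (range (window u n)) := by
    rw [← range_window_succ_image_take]
    exact (hfin.image _).to_subtype
  obtain ⟨i, j, hne, hij⟩ := Finite.exists_ne_map_eq_of_infinite (rangeFactorization (window u n))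
  wlog hlt : i < j generalizing i j
  · exact this j i hne.symm hij.symm (lt_of_le_of_ne (not_lt.1 hlt) hne.symm)
  have hshift (d : ℕ) : window u n (i + d) = window u n (j + d) := by
    induction d with
    | zero => exact congrArg Subtype.val hij
    | succ d ih => exact (hstep ih).2
  refine ⟨i, j - i, Nat.sub_pos_of_lt hlt, fun k hk => ?_⟩
  obtain ⟨d, rfl⟩ := Nat.exists_eq_add_of_le hk
  rw [show i + d + (j - i) = j + d by omega]
  exact (hstep (hshift d)).1.symm

end Window

lemma floor_add_eq_ite_of_mem_Ico {y : ℝ} (hy : y ∈ Ico (0 : ℝ) 1) (z : ℝ) :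
    ⌊y + z⌋ = if y + z < ⌈z⌉ then ⌈z⌉ - 1 else ⌈z⌉ := by
  have := Int.le_ceil z
  have := Int.ceil_lt_add_one z
  split_ifs with h <;> rw [Int.floor_eq_iff] <;> push_cast <;> constructor <;> linarith [hy.1, hy.2]

lemma eq_zero_of_forall_abs_nat_mul_lt_one {x : ℝ} (h : ∀ M : ℕ, |M * x| < 1) : x = 0 := by
  by_contra hx
  obtain ⟨M, hM⟩ := exists_nat_gt |x|⁻¹
  have := h M
  rw [abs_mul, Nat.abs_cast] at this
  have := (inv_lt_iff_one_lt_mul₀ (abs_pos.2 hx)).1 hM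
  linarith

lemma floor_add_eq_floor_of_forall_abs_lt {x ε : ℝ} (h : ∀ z : ℤ, |ε| < |x - z|) :
    ⌊x + ε⌋ = ⌊x⌋ := by
  have h₀ := h ⌊x⌋
  have h₁ := h (⌊x⌋ + 1)
  have hlo := Int.floor_le x
  have hhi := Int.lt_floor_add_one x
  push_cast at h₁
  rw [abs_of_nonneg (sub_nonneg.2 hlo)] at h₀
  rw [abs_of_neg (by linarith : x - (⌊x⌋ + 1) < 0)] at h₁
  rw [Int.floor_eq_iff]
  constructor <;> linarith [neg_abs_le ε, le_abs_self ε]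

lemma floor_add_two_mul_eq_floor_add {ε : ℝ} (hε : |ε| < 1 / 2) (z : ℤ) :
    ⌊z + 2 * ε⌋ = ⌊z + ε⌋ := by
  rw [abs_lt] at hε
  rw [Int.floor_intCast_add, Int.floor_intCast_add]
  congr 1
  rcases le_or_gt 0 ε with h | h
  · rw [Int.floor_eq_zero_iff.2 ⟨by linarith, by linarith⟩,
      Int.floor_eq_zero_iff.2 ⟨h, by linarith⟩]
  · have h₁ : ⌊2 * ε⌋ = -1 := by rw [Int.floor_eq_iff]; push_cast; constructor <;> linarith
    have h₂ : ⌊ε⌋ = -1 := by rw [Int.floor_eq_iff]; push_cast; constructor <;> linarith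
    rw [h₁, h₂]

section Mechanical

variable (α ρ : ℝ)

noncomputable def mechanicalWord (k : ℕ) : ℤ := ⌊(k + 1) * α + ρ⌋ - ⌊k * α + ρ⌋

lemma mechanicalWord_self (i : ℕ) :
    mechanicalWord α α i = ⌊((i + 2 : ℕ) : ℝ) * α⌋ - ⌊((i + 1 : ℕ) : ℝ) * α⌋ := by
  simp only [mechanicalWord]
  push_cast
  ring_nf

lemma mechanicalWord_add (i t : ℕ) :
    mechanicalWord α ρ (i + t) =
      ⌊Int.fract (i * α + ρ) + (t + 1 : ℕ) * α⌋ - ⌊Int.fract (i * α + ρ) + t * α⌋ := by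
  have hsplit (w : ℝ) : ⌊i * α + ρ + w⌋ = ⌊i * α + ρ⌋ + ⌊Int.fract (i * α + ρ) + w⌋ := by
    rw [← Int.floor_intCast_add, ← add_assoc, Int.floor_add_fract]
  rw [← add_sub_add_left_eq_sub _ _ ⌊i * α + ρ⌋, ← hsplit, ← hsplit, mechanicalWord]
  push_cast
  ring_nf

noncomputable def belowCeil (n : ℕ) (y : ℝ) : Finset ℕ :=
  (Finset.Icc 1 n).filter fun s => y + s * α < ⌈(s : ℝ) * α⌉

lemma belowCeil_antitone (n : ℕ) : Antitone (belowCeil α n) := fun _ _ hyy' _ => by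
  simp only [belowCeil, Finset.mem_filter]
  exact fun ⟨hs, hlt⟩ => ⟨hs, by linarith⟩

lemma floor_add_mul_eq_of_card_belowCeil_eq {n : ℕ} {y y' : ℝ} (hy : y ∈ Ico (0 : ℝ) 1)
    (hy' : y' ∈ Ico (0 : ℝ) 1) (hcard : (belowCeil α n y).card = (belowCeil α n y').card)
    {s : ℕ} (hs : s ≤ n) : ⌊y + s * α⌋ = ⌊y' + s * α⌋ := by
  have hset : belowCeil α n y = belowCeil α n y' := by
    rcases le_total y y' with h | h
    · exact (Finset.eq_of_subset_of_card_le (belowCeil_antitone α n h) hcard.le).symm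
    · exact Finset.eq_of_subset_of_card_le (belowCeil_antitone α n h) hcard.ge
  have hiff : y + s * α < ⌈(s : ℝ) * α⌉ ↔ y' + s * α < ⌈(s : ℝ) * α⌉ := by
    rcases Nat.eq_zero_or_pos s with rfl | hs0
    · simp [hy.1.not_gt, hy'.1.not_gt]
    · have := Finset.ext_iff.1 hset s
      simpa [belowCeil, hs, Nat.one_le_iff_ne_zero.2 hs0.ne'] using this
  rw [floor_add_eq_ite_of_mem_Ico hy, floor_add_eq_ite_of_mem_Ico hy', if_congr hiff rfl rfl]

theorem finite_range_window_mechanicalWord_and_ncard_le (n : ℕ) :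
    (range (window (mechanicalWord α ρ) n)).Finite ∧
      (range (window (mechanicalWord α ρ) n)).ncard ≤ n + 1 := by
  set r : ℕ → ℕ := fun i => (belowCeil α n (Int.fract (i * α + ρ))).card
  have hr : range r ⊆ ↑(Finset.range (n + 1)) := by
    rintro _ ⟨i, rfl⟩
    simpa [r, belowCeil, Nat.lt_succ_iff] using
      (Finset.card_filter_le _ _).trans (Nat.card_Icc 1 n).le
  have hfac : (window (mechanicalWord α ρ) n).FactorsThrough r := fun i j hij => by
    have hfloor {s : ℕ} (hs : s ≤ n) :
        ⌊Int.fract (i * α + ρ) + s * α⌋ = ⌊Int.fract (j * α + ρ) + s * α⌋ :=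
      floor_add_mul_eq_of_card_belowCeil_eq α ⟨Int.fract_nonneg _, Int.fract_lt_one _⟩
        ⟨Int.fract_nonneg _, Int.fract_lt_one _⟩ hij hs
    refine List.map_congr_left fun t ht => ?_
    have ht : t < n := List.mem_range.1 ht
    rw [mechanicalWord_add, mechanicalWord_add, hfloor ht.le, hfloor ht]
  obtain ⟨hfin, hle⟩ := hfac.finite_range_and_ncard_range_le ((Finset.finite_toSet _).subset hr)
  refine ⟨hfin, hle.trans ?_⟩
  simpa using ncard_le_ncard hr

variable {α}

theorem mechanicalWord_not_eventually_periodic (hα : Irrational α) {a p : ℕ} (hp : 0 < p) :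
    ¬ ∀ k ≥ a, mechanicalWord α ρ (k + p) = mechanicalWord α ρ k := by
  intro hper
  set x : ℕ → ℝ := fun k => k * α + ρ
  set c : ℤ := ⌊x (a + p)⌋ - ⌊x a⌋
  have hdiff : ∀ k ≥ a, ⌊x (k + p)⌋ - ⌊x k⌋ = c := by
    refine Nat.le_induction rfl fun k hk ih => ?_
    have := hper k hk
    simp only [mechanicalWord, x, Nat.cast_add, Nat.cast_one, add_right_comm _ 1] at this ih ⊢
    linarith
  have hmul (M : ℕ) : ⌊x (a + M * p)⌋ = ⌊x a⌋ + M * c := by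
    induction M with
    | zero => simp
    | succ M ih =>
      have := hdiff (a + M * p) le_self_add
      rw [add_assoc, ← Nat.succ_mul] at this
      push_cast
      linarith
  have hrat : (p : ℝ) * α = c := by
    refine sub_eq_zero.1 (eq_zero_of_forall_abs_nat_mul_lt_one fun M => ?_)
    have : (M : ℝ) * (p * α - c) = Int.fract (x (a + M * p)) - Int.fract (x a) := by
      rw [← Int.self_sub_floor, ← Int.self_sub_floor, hmul]
      push_cast [x]
      ring
    rw [this]
    exact Int.abs_sub_lt_one_of_floor_eq_floor (by simp)
  exact (hα.natCast_mul hp.ne').ne_int c hrat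

theorem ncard_range_window_mechanicalWord (hα : Irrational α) (n : ℕ) :
    (range (window (mechanicalWord α ρ) n)).ncard = n + 1 := by
  induction n with
  | zero => simp [window]
  | succ n ih =>
    obtain ⟨hfin, hle⟩ := finite_range_window_mechanicalWord_and_ncard_le α ρ (n + 1)
    have hmono := ncard_range_window_le_succ _ n hfin
    have hne : (range (window _ (n + 1))).ncard ≠ (range (window _ n)).ncard := fun h => by
      obtain ⟨a, p, hp, hper⟩ := exists_eventually_periodic_of_ncard_range_window_eq _ hfin h
      exact mechanicalWord_not_eventually_periodic ρ hα hp hper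
    omega

end Mechanical

section GoldenRatio

open Real goldenRatio

lemma abs_goldenConj_pow_lt_half {m : ℕ} (hm : 2 ≤ m) : |ψ ^ m| < 1 / 2 := by
  have hsqrt : 2 < √5 := by rw [Real.lt_sqrt (by norm_num)]; norm_num
  have habs : |ψ| ≤ 1 := abs_le.2 ⟨neg_one_lt_goldenConj.le, by linarith [goldenConj_neg]⟩
  rw [abs_pow]
  calc |ψ| ^ m ≤ |ψ| ^ 2 := pow_le_pow_of_le_one (abs_nonneg _) habs hm
    _ = ψ + 1 := by rw [sq_abs, goldenConj_sq]
    _ < 1 / 2 := by rw [goldenConj]; linarith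

lemma abs_goldenConj_pow_mul_goldenRatio_pow (m : ℕ) : |ψ ^ m| * φ ^ m = 1 := by
  rw [← abs_of_pos (pow_pos goldenRatio_pos m), ← abs_mul, ← mul_pow, goldenConj_mul_goldenRatio,
    abs_pow, abs_neg, abs_one, one_pow]

lemma one_le_abs_mul_goldenRatio_sub_mul_abs_mul_goldenConj_sub {t : ℕ} (ht : t ≠ 0) (z : ℤ) :
    1 ≤ |t * φ - z| * |t * ψ - z| := by
  have hnorm : (t * φ - z) * (t * ψ - z) = ((z ^ 2 - z * t - t ^ 2 : ℤ) : ℝ) := by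
    push_cast
    linear_combination (t : ℝ) ^ 2 * goldenRatio_mul_goldenConj - z * t * goldenRatio_add_goldenConj
  have hne : z ^ 2 - z * t - t ^ 2 ≠ 0 := by
    intro h0
    rw [h0, Int.cast_zero, mul_eq_zero, sub_eq_zero, sub_eq_zero] at hnorm
    rcases hnorm with h | h
    · exact (goldenRatio_irrational.natCast_mul ht).ne_int z h
    · exact (goldenConj_irrational.natCast_mul ht).ne_int z h
  rw [← abs_mul, hnorm, ← Int.cast_abs]
  exact_mod_cast Int.one_le_abs hne

lemma abs_goldenConj_pow_lt_abs_mul_goldenRatio_sub {m t : ℕ} (hm : 2 ≤ m) (ht : 0 < t)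
    (htm : t < Nat.fib m) (z : ℤ) : |ψ ^ m| < |t * φ - z| := by
  have hψ := abs_goldenConj_pow_lt_half hm
  by_cases hhalf : 1 / 2 ≤ |t * φ - z|
  · linarith
  push Not at hhalf
  have hone := one_le_abs_mul_goldenRatio_sub_mul_abs_mul_goldenConj_sub ht.ne' z
  have hconj : |t * ψ - z| < φ ^ m := by
    have htm' : (t : ℝ) ≤ Nat.fib m - 1 := by
      rw [le_sub_iff_add_le]; exact_mod_cast htm
    have hsqrt : 1 < √5 := by rw [Real.lt_sqrt (by norm_num)]; norm_num
    calc |t * ψ - z| ≤ |t * φ - z| + t * √5 := by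
          rw [show (t : ℝ) * ψ - z = (t * φ - z) - t * √5 by
            rw [← goldenRatio_sub_goldenConj]; ring]
          exact (abs_sub _ _).trans_eq (by rw [abs_of_nonneg (by positivity : (0 : ℝ) ≤ t * √5)])
      _ ≤ |t * φ - z| + (Nat.fib m - 1) * √5 := by gcongr
      _ = |t * φ - z| + φ ^ m - ψ ^ m - √5 := by
          rw [Real.coe_fib_eq]; field_simp; ring
      _ < φ ^ m := by linarith [neg_abs_le (ψ ^ m)]
  have hpos : 0 < |t * φ - z| := by
    by_contra! h0
    nlinarith [abs_nonneg (t * φ - z), abs_nonneg (t * ψ - z)]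
  have := abs_goldenConj_pow_mul_goldenRatio_pow m
  nlinarith [mul_lt_mul_of_pos_left hconj hpos]

lemma two_sub_goldenRatio_mem_Ioo : 2 - φ ∈ Ioo (1 / 3 : ℝ) (1 / 2) := by
  have h₁ : 2 < √5 := by rw [Real.lt_sqrt (by norm_num)]; norm_num
  have h₂ : √5 < 7 / 3 := by rw [Real.sqrt_lt' (by norm_num)]; norm_num
  rw [mem_Ioo, goldenRatio]
  constructor <;> linarith

lemma floor_mul_two_sub_goldenRatio_add_goldenConj_pow {m t : ℕ} (hm : 2 ≤ m) (ht : 0 < t)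
    (htm : t ≤ Nat.fib m) : ⌊t * (2 - φ) + ψ ^ m⌋ = ⌊t * (2 - φ)⌋ := by
  rcases htm.lt_or_eq with hlt | rfl
  · refine floor_add_eq_floor_of_forall_abs_lt fun z => ?_
    convert abs_goldenConj_pow_lt_abs_mul_goldenRatio_sub hm ht hlt (2 * t - z) using 1
    rw [← abs_neg]
    push_cast
    ring_nf
  · have h : (Nat.fib m : ℝ) * (2 - φ) = ((2 * Nat.fib m - Nat.fib (m + 1) : ℤ) : ℝ) + ψ ^ m := by
      push_cast
      linarith [fib_succ_sub_goldenRatio_mul_fib m]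
    rw [h, add_assoc, ← two_mul, floor_add_two_mul_eq_floor_add (abs_goldenConj_pow_lt_half hm)]

lemma floor_fib_add_mul_two_sub_goldenRatio {m t : ℕ} (hm : 2 ≤ m) (ht : 0 < t)
    (htm : t ≤ Nat.fib m) :
    ⌊((Nat.fib m + t : ℕ) : ℝ) * (2 - φ)⌋ = 2 * Nat.fib m - Nat.fib (m + 1) + ⌊t * (2 - φ)⌋ := by
  have h : ((Nat.fib m + t : ℕ) : ℝ) * (2 - φ) =
      ((2 * Nat.fib m - Nat.fib (m + 1) : ℤ) : ℝ) + (t * (2 - φ) + ψ ^ m) := by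
    push_cast
    linarith [fib_succ_sub_goldenRatio_mul_fib m]
  rw [h, Int.floor_intCast_add, floor_mul_two_sub_goldenRatio_add_goldenConj_pow hm ht htm]

lemma mechanicalWord_fib_succ_add {k j : ℕ} (hk : 2 ≤ k) (hj : j < Nat.fib k) :
    mechanicalWord (2 - φ) (2 - φ) (Nat.fib (k + 1) + j) = mechanicalWord (2 - φ) (2 - φ) j := by
  have hfib : j + 2 ≤ Nat.fib (k + 1) := by
    obtain ⟨l, rfl⟩ := Nat.exists_eq_add_of_le' hk
    have h₁ : Nat.fib (l + 2 + 1) = Nat.fib (l + 1) + Nat.fib (l + 2) := Nat.fib_add_two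
    have h₂ : 0 < Nat.fib (l + 1) := Nat.fib_pos.2 l.succ_pos
    omega
  rw [mechanicalWord_self, mechanicalWord_self, add_assoc, add_assoc,
    floor_fib_add_mul_two_sub_goldenRatio (by omega) (by omega) hfib,
    floor_fib_add_mul_two_sub_goldenRatio (by omega) (by omega) (by omega)]
  ring

lemma fibPhi_append (v w : List ℕ) : fibPhi (v ++ w) = fibPhi v ++ fibPhi w := by
  simp [fibPhi]

def fibBlock (k : ℕ) : List ℕ := fibPhi^[k] [0]

lemma fibBlock_succ (k : ℕ) : fibBlock (k + 1) = fibPhi (fibBlock k) :=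
  iterate_succ_apply' _ _ _

lemma fibBlock_add_two (k : ℕ) : fibBlock (k + 2) = fibBlock (k + 1) ++ fibBlock k := by
  induction k with
  | zero => rfl
  | succ k ih => conv_lhs => rw [fibBlock_succ, ih, fibPhi_append, ← fibBlock_succ, ← fibBlock_succ]

lemma map_natCast_fibBlock (k : ℕ) :
    (fibBlock k).map ((↑) : ℕ → ℤ) =
      window (mechanicalWord (2 - φ) (2 - φ)) (Nat.fib (k + 2)) 0 := by
  obtain ⟨hlo, hhi⟩ := two_sub_goldenRatio_mem_Ioo
  have h₁ : ⌊2 - φ⌋ = 0 := Int.floor_eq_zero_iff.2 ⟨by linarith, by linarith⟩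
  have h₂ : ⌊2 * (2 - φ)⌋ = 0 := Int.floor_eq_zero_iff.2 ⟨by linarith, by linarith⟩
  have h₃ : ⌊3 * (2 - φ)⌋ = 1 := by rw [Int.floor_eq_iff]; push_cast; constructor <;> linarith
  induction k using Nat.twoStepInduction with
  | zero => simp [fibBlock, window, mechanicalWord_self, h₁, h₂]
  | one =>
    norm_num [fibBlock, fibPhi, window, mechanicalWord_self, show Nat.fib 3 = 2 from rfl,
      List.range_succ, h₁, h₂, h₃]
  | more k ih₀ ih₁ =>
    have hfib : Nat.fib (k + 2 + 2) = Nat.fib (k + 1 + 2) + Nat.fib (k + 2) := by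
      rw [Nat.fib_add_two, add_comm]
    rw [fibBlock_add_two, List.map_append, ih₁, ih₀, hfib, window_add]
    congr 1
    refine List.map_congr_left fun j hj => ?_
    rw [zero_add, zero_add, mechanicalWord_fib_succ_add (by omega) (List.mem_range.1 hj)]

lemma natCast_fibWord (i : ℕ) : (fibWord i : ℤ) = mechanicalWord (2 - φ) (2 - φ) i := by
  have hlen : i < ((fibBlock (i + 2)).map ((↑) : ℕ → ℤ)).length := by
    rw [map_natCast_fibBlock, length_window]
    have : i + 2 ≤ Nat.fib (i + 2 + 2) := Nat.fib_add_two_strictMono.id_le (i + 2)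
    omega
  have := List.getElem_of_eq (map_natCast_fibBlock (i + 2)) hlen
  simp only [List.getElem_map, window, List.getElem_range, zero_add] at this
  rw [fibWord, ← fibBlock, List.getD_eq_getElem _ _ (by simpa using hlen), this]

lemma natCast_comp_fibWord : ((↑) : ℕ → ℤ) ∘ fibWord = mechanicalWord (2 - φ) (2 - φ) :=
  funext natCast_fibWord

lemma irrational_two_sub_goldenRatio : Irrational (2 - φ) := by
  exact_mod_cast goldenRatio_irrational.natCast_sub 2

end GoldenRatio

/-- The Fibonacci word has exactly n + 1 distinct factors of each length n. -/
theorem fibWord_subword_complexity :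
    ∀ n : ℕ, {x : List ℕ | IsFibFactor x ∧ x.length = n}.ncard = n + 1 := by
  intro n
  have hfactors : {x : List ℕ | IsFibFactor x ∧ x.length = n} = range (window fibWord n) := by
    ext x
    constructor
    · rintro ⟨⟨i, hx⟩, rfl⟩
      exact ⟨i, hx.symm⟩
    · rintro ⟨i, rfl⟩
      exact ⟨⟨i, by rw [length_window]; rfl⟩, length_window _ n i⟩
  rw [hfactors, ← ncard_range_window_comp fibWord (Nat.cast_injective (R := ℤ)),
    natCast_comp_fibWord, ncard_range_window_mechanicalWord _ irrational_two_sub_goldenRatio]
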